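/- arXiv:2001.01148 — 2 statements merged into one kernel-verified Lean document; each statement's English description precedes it below -/
import Mathlib

section
/- The function γ0(x) = ∫_ℝ (n0(y)+f0(y+x))·y²·sgn(y) dy is strictly positive for all real x. -/
/-!
The reflection `n0 (-y) = -1 - n0 y`, `f0 (-u) = 1 - f0 u` gives `k0 (-x) (-y) = k0 x y`, so the
integrand on `y < 0` is the integrand for `-x` on `y > 0`, where it is plainly positive. Hence it is
nonnegative, and integrable as soon as it is integrable on `(0, ∞)`; there
`y e^{y/2} ≤ e^y - 1` (i.e. `y / 2 ≤ sinh (y / 2)`) and `f0 u ≤ e^{-u}` dominate it by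
`y e^{-y/2} + e^{-x} y² e^{-y}`.
A nonnegative integrable function that is positive on `(0, ∞)` has positive integral.
-/

open MeasureTheory Real

noncomputable def f0 (x : ℝ) : ℝ := 1 / (Real.exp x + 1)
noncomputable def n0 (y : ℝ) : ℝ := 1 / (Real.exp y - 1)
noncomputable def w (x : ℝ) : ℝ := f0 x * (1 - f0 x)
noncomputable def k0 (x y : ℝ) : ℝ := (n0 y + f0 (y + x)) * y ^ 2 * Real.sign y
noncomputable def K0bar (e u : ℝ) : ℝ := (n0 (u - e) + f0 u) * (u - e) ^ 2 * Real.sign (u - e)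
noncomputable def Gamma0 (e : ℝ) : ℝ := ∫ u, K0bar e u
noncomputable def gamma0 (x : ℝ) : ℝ := ∫ y, k0 x y

open Set

lemma integrableOn_pow_mul_exp_neg_mul_Ioi (n : ℕ) {b : ℝ} (hb : 0 < b) :
    IntegrableOn (fun y : ℝ => y ^ n * exp (-b * y)) (Ioi 0) := by
  have hn : (-1 : ℝ) < n := by linarith [n.cast_nonneg (α := ℝ)]
  refine (integrableOn_rpow_mul_exp_neg_mul_rpow hn one_pos hb).congr_fun
    (fun y _ => ?_) measurableSet_Ioi
  simp only [rpow_natCast, rpow_one]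

lemma mul_exp_half_le_exp_sub_one {y : ℝ} (hy : 0 ≤ y) : y * exp (y / 2) ≤ exp y - 1 := by
  have hsinh := self_le_sinh_iff.2 (by positivity : 0 ≤ y / 2)
  rw [sinh_eq] at hsinh
  have hsq : exp y = exp (y / 2) ^ 2 := by rw [← exp_nat_mul]; ring_nf
  have hinv : exp (-(y / 2)) * exp (y / 2) = 1 := by rw [← exp_add]; simp
  nlinarith [exp_pos (y / 2)]

lemma sq_mul_n0_le {y : ℝ} (hy : 0 < y) : y ^ 2 * n0 y ≤ y * exp (-(y / 2)) := by
  have hinv : exp (-(y / 2)) * exp (y / 2) = 1 := by rw [← exp_add]; simp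
  rw [n0, mul_one_div, div_le_iff₀ (sub_pos.2 (one_lt_exp_iff.2 hy))]
  nlinarith [mul_exp_half_le_exp_sub_one hy.le, mul_pos hy (exp_pos (-(y / 2)))]

lemma f0_le_exp_neg (u : ℝ) : f0 u ≤ exp (-u) := by
  rw [f0, exp_neg, one_div]
  exact inv_anti₀ (exp_pos u) (by linarith)

lemma f0_neg (u : ℝ) : f0 (-u) = 1 - f0 u := by
  have hexp := exp_pos u
  rw [f0, f0, exp_neg]
  field_simp
  ring

lemma n0_neg {y : ℝ} (hy : y ≠ 0) : n0 (-y) = -1 - n0 y := by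
  have h : exp y - 1 ≠ 0 := sub_ne_zero.2 (fun h => hy (exp_eq_one_iff y |>.1 h))
  have h' : 1 - exp y ≠ 0 := fun h0 => h (by linarith)
  rw [n0, n0, exp_neg]
  field_simp
  ring

lemma k0_of_pos (x : ℝ) {y : ℝ} (hy : 0 < y) : k0 x y = (n0 y + f0 (y + x)) * y ^ 2 := by
  rw [k0, sign_of_pos hy, mul_one]

lemma k0_neg_neg (x y : ℝ) : k0 (-x) (-y) = k0 x y := by
  rcases eq_or_ne y 0 with rfl | hy
  · simp [k0]
  rw [k0, k0, n0_neg hy, show -y + -x = -(y + x) by ring, f0_neg, Real.sign_neg]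
  ring

lemma k0_pos (x : ℝ) {y : ℝ} (hy : 0 < y) : 0 < k0 x y := by
  rw [k0_of_pos x hy]
  have hn0 : 0 < n0 y := one_div_pos.2 (sub_pos.2 (one_lt_exp_iff.2 hy))
  have hf0 : 0 < f0 (y + x) := by rw [f0]; positivity
  positivity

lemma k0_nonneg (x y : ℝ) : 0 ≤ k0 x y := by
  rcases lt_trichotomy y 0 with hy | rfl | hy
  · rw [← k0_neg_neg]
    exact (k0_pos (-x) (neg_pos.2 hy)).le
  · simp [k0]
  · exact (k0_pos x hy).le

lemma k0_le_of_pos (x : ℝ) {y : ℝ} (hy : 0 < y) :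
    k0 x y ≤ y * exp (-(y / 2)) + exp (-x) * (y ^ 2 * exp (-y)) := by
  have hf0 : f0 (y + x) * y ^ 2 ≤ exp (-x) * (y ^ 2 * exp (-y)) := calc
    f0 (y + x) * y ^ 2 ≤ exp (-(y + x)) * y ^ 2 := by gcongr; exact f0_le_exp_neg _
    _ = exp (-x) * (y ^ 2 * exp (-y)) := by rw [neg_add, exp_add]; ring
  rw [k0_of_pos x hy, add_mul]
  linarith [sq_mul_n0_le hy]

lemma integrableOn_k0_Ioi (x : ℝ) : IntegrableOn (k0 x) (Ioi 0) := by
  have hdom : IntegrableOn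
      (fun y : ℝ => y ^ 1 * exp (-(1 / 2) * y) + exp (-x) * (y ^ 2 * exp (-1 * y))) (Ioi 0) :=
    (integrableOn_pow_mul_exp_neg_mul_Ioi 1 (by norm_num)).add
      ((integrableOn_pow_mul_exp_neg_mul_Ioi 2 one_pos).const_mul _)
  have hmeas : Measurable fun y => (n0 y + f0 (y + x)) * y ^ 2 := by unfold n0 f0; fun_prop
  have hpos : IntegrableOn (fun y => (n0 y + f0 (y + x)) * y ^ 2) (Ioi 0) := by
    refine hdom.mono' hmeas.aestronglyMeasurable
      (ae_restrict_of_forall_mem measurableSet_Ioi fun y hy => ?_)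
    rw [← k0_of_pos x hy, norm_of_nonneg (k0_nonneg x y)]
    convert k0_le_of_pos x hy using 3 <;> ring_nf
  exact hpos.congr_fun (fun y hy => (k0_of_pos x hy).symm) measurableSet_Ioi

lemma integrable_k0 (x : ℝ) : Integrable (k0 x) := by
  rw [← integrableOn_univ, ← Iic_union_Ioi (a := 0), integrableOn_union]
  refine ⟨?_, integrableOn_k0_Ioi x⟩
  have hrefl := (integrableOn_k0_Ioi (-x)).comp_neg
  rw [integrableOn_Iic_iff_integrableOn_Iio enorm_ne_top]
  simpa [k0_neg_neg] using hrefl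

theorem gamma0_pos (x : ℝ) : 0 < gamma0 x := by
  rw [gamma0, integral_pos_iff_support_of_nonneg (k0_nonneg x) (integrable_k0 x)]
  calc (0 : ENNReal) < volume (Ioi (0 : ℝ)) := by simp
    _ ≤ volume (Function.support (k0 x)) := measure_mono fun y hy => (k0_pos x hy).ne'
end

section
/- Under the same hypotheses, (1+λ)∫_ℝ w(ε)Γ0(ε)φ(ε)² dε = (1/2)∫∫ w(ε)K̄0(ε,u)(φ(u)+φ(ε))² dε du. Consequently, if λ = -1 then φ = 0 almost everywhere with respect to the measure w·Γ0·dε; i.e., -1 is not an eigenvalue of the operator K0 = K̄0/Γ0. -/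
open MeasureTheory Real

/-!
Detailed balance `w ε K̄₀(ε,u) = w u K̄₀(u,ε)` makes `M(ε,u) := w ε K̄₀(ε,u)` a symmetric kernel
with row sums `w Γ₀`, and the eigenvalue equation says `∫ M(ε,u) φ u du = λ w ε Γ₀ ε φ ε`.
Expanding the square, the two diagonal terms of `∫∫ M (φ u + φ ε)²` each give `∫ w Γ₀ φ²` by
symmetry, and the cross term gives `2λ ∫ w Γ₀ φ²`. For `λ = -1` the integral vanishes; since
`M > 0` off the (null) diagonal, `φ u = -φ ε` for almost every pair, which forces `φ = 0` almost
everywhere.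
-/

section SymmetricKernel

variable {α : Type*} [MeasurableSpace α] {μ : Measure α} {M : α → α → ℝ} {φ : α → ℝ}

theorem integrable_mul_sq_fst_of_integrable_mul_add_sq (hM_nonneg : ∀ x y, 0 ≤ M x y)
    (hM : Measurable fun p : α × α => M p.1 p.2) (hφ : Measurable φ)
    (h_sq : Integrable (fun p : α × α => M p.1 p.2 * (φ p.2 + φ p.1) ^ 2) (μ.prod μ))
    (h_mul : Integrable (fun p : α × α => M p.1 p.2 * φ p.1 * φ p.2) (μ.prod μ)) :
    Integrable (fun p : α × α => M p.1 p.2 * φ p.1 ^ 2) (μ.prod μ) := by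
  refine (h_sq.sub (h_mul.const_mul 2)).mono' ?_ (ae_of_all _ fun p => ?_)
  · exact (hM.mul ((hφ.comp measurable_fst).pow_const 2)).aestronglyMeasurable
  · have hMp := hM_nonneg p.1 p.2
    rw [Real.norm_of_nonneg (by positivity)]
    simp only [Pi.sub_apply]
    nlinarith [mul_nonneg hMp (sq_nonneg (φ p.2))]

theorem integral_mul_sq_snd_eq_fst_of_symm [SFinite μ] (hM_symm : ∀ x y, M x y = M y x) :
    ∫ p, M p.1 p.2 * φ p.2 ^ 2 ∂μ.prod μ = ∫ p, M p.1 p.2 * φ p.1 ^ 2 ∂μ.prod μ := by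
  rw [← integral_prod_swap]
  simp only [Prod.fst_swap, Prod.snd_swap, hM_symm _ _]

theorem integral_mul_add_sq_of_symm_of_eigen [SFinite μ] (hM_symm : ∀ x y, M x y = M y x)
    (hM_nonneg : ∀ x y, 0 ≤ M x y) (hM : Measurable fun p : α × α => M p.1 p.2)
    (hφ : Measurable φ)
    (h_sq : Integrable (fun p : α × α => M p.1 p.2 * (φ p.2 + φ p.1) ^ 2) (μ.prod μ))
    (h_mul : Integrable (fun p : α × α => M p.1 p.2 * φ p.1 * φ p.2) (μ.prod μ)) {lam : ℝ}
    (heig : ∀ x, ∫ y, M x y * φ y ∂μ = lam * (∫ y, M x y ∂μ) * φ x) :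
    ∫ p, M p.1 p.2 * (φ p.2 + φ p.1) ^ 2 ∂μ.prod μ =
      2 * (1 + lam) * ∫ x, (∫ y, M x y ∂μ) * φ x ^ 2 ∂μ := by
  have hA := integrable_mul_sq_fst_of_integrable_mul_add_sq hM_nonneg hM hφ h_sq h_mul
  have hB : Integrable (fun p : α × α => M p.1 p.2 * φ p.2 ^ 2) (μ.prod μ) :=
    ((h_sq.sub (h_mul.const_mul 2)).sub hA).congr
      (ae_of_all _ fun p => by simp only [Pi.sub_apply]; ring)
  have hA_eq : ∫ p, M p.1 p.2 * φ p.1 ^ 2 ∂μ.prod μ = ∫ x, (∫ y, M x y ∂μ) * φ x ^ 2 ∂μ := by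
    simp only [integral_prod _ hA, integral_mul_const]
  have hC_eq : ∫ p, M p.1 p.2 * φ p.1 * φ p.2 ∂μ.prod μ =
      lam * ∫ x, (∫ y, M x y ∂μ) * φ x ^ 2 ∂μ := by
    rw [integral_prod _ h_mul, ← integral_const_mul]
    congr 1 with x
    calc ∫ y, M x y * φ x * φ y ∂μ = φ x * ∫ y, M x y * φ y ∂μ := by
          rw [← integral_const_mul]; congr 1 with y; ring
      _ = _ := by rw [heig]; ring
  calc ∫ p, M p.1 p.2 * (φ p.2 + φ p.1) ^ 2 ∂μ.prod μ
      = ∫ p, (M p.1 p.2 * φ p.1 ^ 2 + M p.1 p.2 * φ p.2 ^ 2) + 2 * (M p.1 p.2 * φ p.1 * φ p.2)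
          ∂μ.prod μ := by congr 1 with p; ring
    _ = ∫ p, M p.1 p.2 * φ p.1 ^ 2 ∂μ.prod μ + ∫ p, M p.1 p.2 * φ p.2 ^ 2 ∂μ.prod μ
          + 2 * ∫ p, M p.1 p.2 * φ p.1 * φ p.2 ∂μ.prod μ := by
      rw [integral_add _ (h_mul.const_mul 2), integral_add hA hB, integral_const_mul]
      exact hA.add hB
    _ = _ := by rw [integral_mul_sq_snd_eq_fst_of_symm hM_symm, hA_eq, hC_eq]; ring

theorem ae_add_eq_zero_of_integral_mul_add_sq_eq_zero (hM_nonneg : ∀ x y, 0 ≤ M x y)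
    (hM_pos : ∀ᵐ p : α × α ∂μ.prod μ, 0 < M p.1 p.2)
    (h_sq : Integrable (fun p : α × α => M p.1 p.2 * (φ p.2 + φ p.1) ^ 2) (μ.prod μ))
    (h_zero : ∫ p, M p.1 p.2 * (φ p.2 + φ p.1) ^ 2 ∂μ.prod μ = 0) :
    ∀ᵐ p : α × α ∂μ.prod μ, φ p.2 + φ p.1 = 0 := by
  have h_ae := (integral_eq_zero_iff_of_nonneg
    (fun p : α × α => mul_nonneg (hM_nonneg p.1 p.2) (sq_nonneg _)) h_sq).1 h_zero
  filter_upwards [h_ae, hM_pos] with p hp hpos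
  exact pow_eq_zero_iff two_ne_zero |>.1 ((mul_eq_zero.1 hp).resolve_left hpos.ne')

theorem ae_eq_zero_of_ae_add_eq_zero [SFinite μ] [NeZero μ]
    (h : ∀ᵐ p : α × α ∂μ.prod μ, φ p.2 + φ p.1 = 0) : φ =ᵐ[μ] 0 := by
  have h' := Measure.ae_ae_of_ae_prod h
  obtain ⟨x₀, hx₀⟩ := h'.exists
  obtain ⟨x₁, hx₁, hx₁'⟩ := (hx₀.and h').exists
  obtain ⟨y, hy₀, hy₁⟩ := (hx₀.and hx₁').exists
  have hφx₀ : φ x₀ = 0 := by linarith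
  filter_upwards [hx₀] with y hy
  simp only [Pi.zero_apply]
  linarith

end SymmetricKernel

theorem ae_snd_ne_fst {α : Type*} [MeasurableSpace α] [MeasurableEq α] {μ ν : Measure α}
    [SFinite ν] [NullSingletonClass ν] : ∀ᵐ p ∂μ.prod ν, p.2 ≠ p.1 := by
  have h_meas : MeasurableSet {p : α × α | p.2 ≠ p.1} :=
    (measurableSet_eq_fun measurable_snd measurable_fst).compl
  rw [Measure.ae_prod_iff_ae_ae h_meas]
  exact ae_of_all _ fun x => measure_eq_zero_iff_ae_notMem.1 (measure_singleton x)

theorem f0_pos (x : ℝ) : 0 < f0 x := by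
  unfold f0; positivity

theorem f0_lt_one (x : ℝ) : f0 x < 1 := by
  rw [f0, div_lt_one (by positivity)]
  linarith [exp_pos x]

theorem w_pos (x : ℝ) : 0 < w x :=
  mul_pos (f0_pos x) (sub_pos.2 (f0_lt_one x))

theorem n0_pos {y : ℝ} (hy : 0 < y) : 0 < n0 y := by
  rw [n0, one_div_pos, sub_pos]
  exact one_lt_exp_iff.2 hy

theorem n0_lt_neg_one {y : ℝ} (hy : y < 0) : n0 y < -1 := by
  have h_lt : exp y - 1 < 0 := by linarith [exp_lt_one_iff.2 hy]
  rw [n0, div_lt_iff_of_neg h_lt]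
  linarith [exp_pos y]

theorem K0bar_pos {e u : ℝ} (h : u ≠ e) : 0 < K0bar e u := by
  have h_sq : 0 < (u - e) ^ 2 := by positivity [sub_ne_zero.2 h]
  rcases h.lt_or_gt with h | h
  · have hy : u - e < 0 := sub_neg.2 h
    have : n0 (u - e) + f0 u < 0 := by linarith [n0_lt_neg_one hy, f0_lt_one u]
    rw [K0bar, sign_of_neg hy]
    nlinarith
  · have hy : 0 < u - e := sub_pos.2 h
    have : 0 < n0 (u - e) + f0 u := by linarith [n0_pos hy, f0_pos u]
    rw [K0bar, sign_of_pos hy]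
    nlinarith

theorem K0bar_nonneg (e u : ℝ) : 0 ≤ K0bar e u := by
  rcases eq_or_ne u e with rfl | h
  · simp [K0bar]
  · exact (K0bar_pos h).le

theorem w_mul_K0bar_comm (e u : ℝ) : w e * K0bar e u = w u * K0bar u e := by
  rcases eq_or_ne u e with rfl | h
  · rfl
  have h_balance : w e * (n0 (u - e) + f0 u) = -(w u * (n0 (e - u) + f0 e)) := by
    have hexp : exp u ≠ exp e := exp_injective.ne h
    simp only [w, f0, n0, exp_sub]
    field_simp [sub_ne_zero.2 hexp, sub_ne_zero.2 hexp.symm]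
    ring
  have h_sign : sign (e - u) = -sign (u - e) := by rw [← sign_neg, neg_sub]
  rw [K0bar, K0bar, h_sign, show (e - u) ^ 2 = (u - e) ^ 2 by ring]
  linear_combination h_balance * ((u - e) ^ 2 * sign (u - e))

theorem Gamma0_pos {e : ℝ} (h : Integrable (K0bar e)) : 0 < Gamma0 e := by
  rw [Gamma0, integral_pos_iff_support_of_nonneg (K0bar_nonneg e) h]
  have h_Ioi : Set.Ioi e ⊆ Function.support (K0bar e) := fun u hu => (K0bar_pos hu.ne').ne'
  exact lt_of_lt_of_le (by simp [volume_Ioi]) (measure_mono h_Ioi)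

theorem Real.measurable_sign : Measurable Real.sign :=
  Measurable.ite measurableSet_Iio measurable_const
    (Measurable.ite measurableSet_Ioi measurable_const measurable_const)

theorem measurable_f0 : Measurable f0 :=
  measurable_const.div (measurable_exp.add measurable_const)

theorem measurable_n0 : Measurable n0 :=
  measurable_const.div (measurable_exp.sub measurable_const)

theorem measurable_w : Measurable w :=
  measurable_f0.mul (measurable_const.sub measurable_f0)

theorem measurable_K0bar : Measurable fun p : ℝ × ℝ => K0bar p.1 p.2 := by
  have h_sub : Measurable fun p : ℝ × ℝ => p.2 - p.1 := measurable_snd.sub measurable_fst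
  exact (((measurable_n0.comp h_sub).add (measurable_f0.comp measurable_snd)).mul
    (h_sub.pow_const 2)).mul (Real.measurable_sign.comp h_sub)

theorem eigenvalue_identity_plus_general (φ : ℝ → ℝ) (lam : ℝ)
    (hmeas : Measurable φ)
    (hker : ∀ e, Integrable (fun u => K0bar e u))
    (hker1 : Integrable (fun p : ℝ × ℝ =>
      w p.1 * K0bar p.1 p.2 * (φ p.2 + φ p.1) ^ 2) (volume : Measure (ℝ × ℝ)))
    (hker2 : Integrable (fun p : ℝ × ℝ =>
      w p.1 * K0bar p.1 p.2 * φ p.1 * φ p.2) (volume : Measure (ℝ × ℝ)))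
    (heig : ∀ e, lam * φ e = ∫ u, (K0bar e u / Gamma0 e) * φ u) :
    ((1 + lam) * ∫ e, w e * Gamma0 e * φ e ^ 2 =
      (1 / 2) * ∫ p : ℝ × ℝ, w p.1 * K0bar p.1 p.2 * (φ p.2 + φ p.1) ^ 2) ∧
    (lam = -1 →
      ∀ᵐ e ∂((volume : Measure ℝ).withDensity fun e => ENNReal.ofReal (w e * Gamma0 e)),
        φ e = 0) := by
  have hM_nonneg (e u : ℝ) : 0 ≤ w e * K0bar e u := mul_nonneg (w_pos e).le (K0bar_nonneg e u)
  have hM_row (e : ℝ) : ∫ u, w e * K0bar e u = w e * Gamma0 e := integral_const_mul _ _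
  have hM_eig (e : ℝ) : ∫ u, w e * K0bar e u * φ u = lam * (∫ u, w e * K0bar e u) * φ e := by
    have hΓ := (Gamma0_pos (hker e)).ne'
    calc ∫ u, w e * K0bar e u * φ u = w e * Gamma0 e * ∫ u, K0bar e u / Gamma0 e * φ u := by
          rw [← integral_const_mul]; congr 1 with u; field_simp
      _ = _ := by rw [← heig, hM_row]; ring
  have h_id := integral_mul_add_sq_of_symm_of_eigen w_mul_K0bar_comm hM_nonneg
    ((measurable_w.comp measurable_fst).mul measurable_K0bar) hmeas hker1 hker2 hM_eig
  simp only [hM_row] at h_id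
  refine ⟨by rw [Measure.volume_eq_prod, h_id]; ring, fun hlam => ?_⟩
  have h_pos : ∀ᵐ p : ℝ × ℝ ∂volume.prod volume, 0 < w p.1 * K0bar p.1 p.2 :=
    ae_snd_ne_fst.mono fun p hp => mul_pos (w_pos p.1) (K0bar_pos hp)
  have h_zero := ae_eq_zero_of_ae_add_eq_zero <|
    ae_add_eq_zero_of_integral_mul_add_sq_eq_zero hM_nonneg h_pos hker1 (by rw [h_id, hlam]; ring)
  exact (withDensity_absolutelyContinuous _ _).ae_le h_zero

theorem eigenvalue_identity_plus (φ : ℝ → ℝ) (lam : ℝ)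
    (hmeas : Measurable φ)
    (hL2 : Integrable (fun e => w e * Gamma0 e * φ e ^ 2))
    (hker : ∀ e, Integrable (fun u => K0bar e u))
    (hker1 : Integrable (fun p : ℝ × ℝ =>
      w p.1 * K0bar p.1 p.2 * (φ p.2 + φ p.1) ^ 2) (volume : Measure (ℝ × ℝ)))
    (hker2 : Integrable (fun p : ℝ × ℝ =>
      w p.1 * K0bar p.1 p.2 * φ p.1 * φ p.2) (volume : Measure (ℝ × ℝ)))
    (heig : ∀ e, lam * φ e = ∫ u, (K0bar e u / Gamma0 e) * φ u) :
    ((1 + lam) * ∫ e, w e * Gamma0 e * φ e ^ 2 =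
      (1 / 2) * ∫ p : ℝ × ℝ, w p.1 * K0bar p.1 p.2 * (φ p.2 + φ p.1) ^ 2) ∧
    (lam = -1 →
      ∀ᵐ e ∂((volume : Measure ℝ).withDensity fun e => ENNReal.ofReal (w e * Gamma0 e)),
        φ e = 0) :=
  eigenvalue_identity_plus_general φ lam hmeas hker hker1 hker2 heig
end
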